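/- arXiv:0807.1451 — 4 statements merged into one kernel-verified Lean document; each statement's English description precedes it below -/
import Mathlib

section
/- Let S be a set, let e be a non-principal ultrafilter on S, let k, r ≥ 1, and let [S]^k = A_1 ∪ … ∪ A_r. For each i ∈ {1,…,r}, each t ∈ {1,…,k} and each E ∈ [S]^{t-1}, define B_t(E,i) by downward induction on t: for E ∈ [S]^{k-1}, B_k(E,i) := {y ∈ S ∖ E : E ∪ {y} ∈ A_i}; for 1 ≤ t < k and E ∈ [S]^{t-1}, B_t(E,i) := {y ∈ S ∖ E : B_{t+1}(E ∪ {y}, i) ∈ e}. Then there exists some i ∈ {1,…,r} such that B_1(∅, i) ∈ e. -/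
/-- The sets `B_t(E,i)` of the basic lemma, defined by downward induction on `t`:
`BSet e A j E` is `B_{k-j}(E, i)` for the cell `A = A_i`.  That is,
`BSet e A 0 E = B_k(E,i) = {y ∉ E : E ∪ {y} ∈ A}` and
`BSet e A (j+1) E = {y ∉ E : BSet e A j (E ∪ {y}) ∈ e}`. -/
def BSet {S : Type*} [DecidableEq S] (e : Ultrafilter S) (A : Set (Finset S)) :
    ℕ → Finset S → Set S
  | 0, E => {y | y ∉ E ∧ insert y E ∈ A}
  | j + 1, E => {y | y ∉ E ∧ BSet e A j (insert y E) ∈ e}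

/-- Let `S` be a set, `e` a non-principal ultrafilter on `S`, `k, r ≥ 1` and
`[S]^k = A 0 ∪ … ∪ A (r-1)`.  With `B_t(E,i)` defined by downward induction as above
(`B_1(∅,i) = BSet e (A i) (k-1) ∅`), there is some `i` with `B_1(∅, i) ∈ e`. -/
theorem basic_ultrafilter_ramsey_lemma
    {S : Type*} [DecidableEq S] (e : Ultrafilter S)
    (hnp : ∀ s : S, e ≠ pure s) (k r : ℕ) (hk : 1 ≤ k) (hr : 1 ≤ r)
    (A : Fin r → Set (Finset S))
    (hA : {E : Finset S | E.card = k} = ⋃ i, A i) :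
    ∃ i : Fin r, BSet e (A i) (k - 1) ∅ ∈ e := by
  -- cofinite sets belong to e
  have hcof : ∀ E : Finset S, (↑E : Set S)ᶜ ∈ e := by
    intro E
    by_contra h
    have hE : (↑E : Set S) ∈ e :=
      by_contra fun hne => h (Ultrafilter.compl_mem_iff_notMem.mpr hne)
    obtain ⟨x, _, hx⟩ := Ultrafilter.eq_pure_of_finite_mem E.finite_toSet hE
    exact hnp x hx
  -- pointwise claim
  have key : ∀ j : ℕ, ∀ E : Finset S, E.card + j + 1 = k →
      ∀ y : S, y ∉ E → ∃ i, y ∈ BSet e (A i) j E := by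
    intro j
    induction j with
    | zero =>
      intro E hcard y hy
      have hmem : insert y E ∈ {E : Finset S | E.card = k} := by
        simp only [Set.mem_setOf_eq, Finset.card_insert_of_notMem hy]
        omega
      rw [hA] at hmem
      obtain ⟨i, hi⟩ := Set.mem_iUnion.mp hmem
      exact ⟨i, hy, hi⟩
    | succ j ih =>
      intro E hcard y hy
      have hcard' : (insert y E).card + j + 1 = k := by
        rw [Finset.card_insert_of_notMem hy]; omega
      -- the union over i covers the complement of insert y E
      have hsub : (↑(insert y E) : Set S)ᶜ ⊆ ⋃ i, BSet e (A i) j (insert y E) := by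
        intro z hz
        obtain ⟨i, hi⟩ := ih (insert y E) hcard' z (by simpa using hz)
        exact Set.mem_iUnion.mpr ⟨i, hi⟩
      have hu : (⋃ i, BSet e (A i) j (insert y E)) ∈ e :=
        e.toFilter.mem_of_superset (hcof _) hsub
      rw [← Set.biUnion_univ] at hu
      obtain ⟨i, _, hi⟩ := (Ultrafilter.finite_biUnion_mem_iff (Set.finite_univ)).mp hu
      exact ⟨i, hy, hi⟩
  -- conclude for E = ∅, j = k - 1
  have hsub : (↑(∅ : Finset S) : Set S)ᶜ ⊆ ⋃ i, BSet e (A i) (k - 1) ∅ := by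
    intro z _
    obtain ⟨i, hi⟩ := key (k - 1) ∅ (by simp; omega) z (by simp)
    exact Set.mem_iUnion.mpr ⟨i, hi⟩
  have hu : (⋃ i, BSet e (A i) (k - 1) ∅) ∈ e :=
    e.toFilter.mem_of_superset (hcof _) hsub
  rw [← Set.biUnion_univ] at hu
  obtain ⟨i, _, hi⟩ := (Ultrafilter.finite_biUnion_mem_iff (Set.finite_univ)).mp hu
  exact ⟨i, hi⟩
end

section
/- Let (S,·) be a semigroup such that there exists a non-principal idempotent ultrafilter e on S, let k, r ≥ 1, and let [S]^k = A_1 ∪ … ∪ A_r. Then there exist i ∈ {1,…,r} and a tree T ⊆ S^{<ω} such that for all f ∈ T and all α_1 < α_2 < … < α_k ⊆ dom f with each α_j ∈ P_f(ω), one has: (1) T(f) ∈ e, and (2) {∏_{t∈α_1} f(t), ∏_{t∈α_2} f(t), …, ∏_{t∈α_k} f(t)} ∈ A_i. -/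
/- The semigroup structure on `βS = Ultrafilter S`, with
`A ∈ p * q ↔ {s | {t | s * t ∈ A} ∈ q} ∈ p`. -/
attribute [local instance] Ultrafilter.mul Ultrafilter.semigroup

/-- The ordered product of a `Monoid`-valued function over a finite set of
natural-number indices, the factors being taken in increasing order of the indices. -/
def oListProd {M : Type*} [Monoid M] (f : ℕ → M) (α : Finset ℕ) : M :=
  ((α.sort (· ≤ ·)).map f).prod

/-- A finite sequence in `S` is a list; a nonempty `T ⊆ S^{<ω}` is a tree iff it is
closed under restrictions, i.e. under taking prefixes. -/
def IsTree {S : Type*} (T : Set (List S)) : Prop :=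
  T.Nonempty ∧ ∀ g ∈ T, ∀ f : List S, f <+: g → f ∈ T

/-- `T(f) = {s ∈ S : f⌢s ∈ T}`. -/
def treeSucc {S : Type*} (T : Set (List S)) (f : List S) : Set S :=
  {s | f ++ [s] ∈ T}

/-- The ordered product `∏_{t ∈ α} f(t)` of entries of the finite sequence `f`,
taken in increasing order of indices and computed in `WithOne S` (indices outside the
domain of `f` contribute the unit; in all uses `α ⊆ dom f`). -/
def lProd {S : Type*} [Semigroup S] (f : List S) (α : Finset ℕ) : WithOne S :=
  oListProd (fun t => (f[t]?.elim (1 : WithOne S) (fun s => (s : WithOne S)))) α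

/-!
By iterated `e`-limits there is a colour `i` such that for `e`-almost every `x₁`, then `e`-almost
every `x₂`, …, then `e`-almost every `x_k`, the set `{x₁, …, x_k}` has colour `i`; non-principality
of `e` makes the `xⱼ` distinct. The tree consists of the sequences in which the products of any
`m ≤ k` successive blocks form such a good chain, with each `xⱼ` taken moreover in the star set
`V⋆ = {s ∈ V | s⁻¹V ∈ e}` of the set `V` of its good continuations. Idempotence of `e` gives
`V⋆ ∈ e` and `s⁻¹V⋆ ∈ e` for `s ∈ V⋆`. A new entry `s` of a node `f` either opens a new block or
turns the product `t` of the last block into `t * s`; as `dom f` carries only finitely many block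
sequences, `e`-almost every `s` keeps `f⌢s` in the tree.
-/
theorem Finset.sort_union_of_forall_lt {α : Type*} [LinearOrder α] {s t : Finset α}
    (h : ∀ a ∈ s, ∀ b ∈ t, a < b) :
    (s ∪ t).sort (· ≤ ·) = s.sort (· ≤ ·) ++ t.sort (· ≤ ·) := by
  have hlt : (s.sort (· ≤ ·) ++ t.sort (· ≤ ·)).Pairwise (· < ·) :=
    List.pairwise_append.2 ⟨(s.sortedLT_sort).pairwise, (t.sortedLT_sort).pairwise,
      fun a ha b hb => h a (by simpa using ha) b (by simpa using hb)⟩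
  have hunion : (s.sort (· ≤ ·) ++ t.sort (· ≤ ·)).toFinset = s ∪ t := by ext; simp
  rw [← hunion, List.toFinset_sort _ hlt.nodup]
  exact hlt.imp le_of_lt

theorem oListProd_union {M : Type*} [Monoid M] (f : ℕ → M) {s t : Finset ℕ}
    (h : ∀ a ∈ s, ∀ b ∈ t, a < b) :
    oListProd f (s ∪ t) = oListProd f s * oListProd f t := by
  simp only [oListProd, Finset.sort_union_of_forall_lt h, List.map_append, List.prod_append]

theorem List.finite_length_le_of_forall_mem {α : Type*} {s : Set α} (hs : s.Finite) (n : ℕ) :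
    {l : List α | l.length ≤ n ∧ ∀ a ∈ l, a ∈ s}.Finite := by
  have := hs.to_subtype
  refine ((List.finite_length_le s n).image (List.map Subtype.val)).subset ?_
  rintro l ⟨hl, hs⟩
  exact ⟨l.pmap Subtype.mk hs, by simpa using hl, by simp [List.map_pmap]⟩

section BlockProducts

variable {S : Type*} [Semigroup S]

theorem lProd_congr {f g : List S} {α : Finset ℕ} (h : ∀ t ∈ α, f[t]? = g[t]?) :
    lProd f α = lProd g α := by
  simp only [lProd, oListProd]
  exact congrArg List.prod (List.map_congr_left fun t ht => by rw [h t (by simpa using ht)])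

theorem lProd_append_of_forall_lt {f : List S} (g : List S) {α : Finset ℕ}
    (h : ∀ t ∈ α, t < f.length) : lProd (f ++ g) α = lProd f α :=
  lProd_congr fun t ht => List.getElem?_append_left (h t ht)

theorem lProd_insert_of_forall_lt (f : List S) {α : Finset ℕ} {a : ℕ} (h : ∀ t ∈ α, t < a) :
    lProd f (insert a α) = lProd f α * lProd f {a} := by
  rw [Finset.insert_eq, Finset.union_comm]
  exact oListProd_union _ (by simpa using h)

theorem lProd_singleton_of_lt {f : List S} {t : ℕ} (h : t < f.length) :
    lProd f {t} = f[t] := by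
  simp [lProd, oListProd, List.getElem?_eq_getElem h]

theorem lProd_append_singleton_insert_length {f : List S} (s : S) {α : Finset ℕ}
    (h : ∀ t ∈ α, t < f.length) : lProd (f ++ [s]) (insert f.length α) = lProd f α * s := by
  rw [lProd_insert_of_forall_lt _ h, lProd_append_of_forall_lt _ h,
    lProd_singleton_of_lt (by simp)]
  simp

theorem exists_lProd_eq_coe {f : List S} {α : Finset ℕ} (hne : α.Nonempty)
    (h : ∀ t ∈ α, t < f.length) : ∃ x : S, lProd f α = x := by
  induction α using Finset.induction_on_max with
  | empty => exact absurd hne Finset.not_nonempty_empty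
  | insert a α ha ih =>
    have ha' : a < f.length := h a (Finset.mem_insert_self a α)
    rcases α.eq_empty_or_nonempty with rfl | hαne
    · exact ⟨f[a], lProd_singleton_of_lt ha'⟩
    · obtain ⟨x, hx⟩ := ih hαne fun t ht => h t (Finset.mem_insert_of_mem ht)
      exact ⟨x * f[a], by rw [lProd_insert_of_forall_lt _ ha, hx, lProd_singleton_of_lt ha']; rfl⟩

end BlockProducts

/-- Blocks `α₁ < ⋯ < αₘ` of `P_f(ω)` inside `{0, …, n - 1}`, listed newest first as
`[αₘ, …, α₁]`. -/
def IsBlockSeq (n : ℕ) (L : List (Finset ℕ)) : Prop :=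
  (∀ β ∈ L, β.Nonempty ∧ ∀ t ∈ β, t < n) ∧ L.Pairwise fun γ β => ∀ a ∈ β, ∀ b ∈ γ, a < b

namespace IsBlockSeq

variable {n m : ℕ} {β : Finset ℕ} {L M : List (Finset ℕ)}

theorem cons_iff : IsBlockSeq n (β :: M) ↔
    β.Nonempty ∧ (∀ t ∈ β, t < n) ∧ IsBlockSeq n M ∧ ∀ γ ∈ M, ∀ a ∈ γ, ∀ b ∈ β, a < b := by
  simp only [IsBlockSeq, List.forall_mem_cons, List.pairwise_cons]
  tauto

theorem nil_iff_zero : IsBlockSeq 0 L ↔ L = [] := by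
  refine ⟨fun h => ?_, fun h => by simp [h, IsBlockSeq]⟩
  rcases L with _ | ⟨β, M⟩
  · rfl
  · obtain ⟨⟨t, ht⟩, hlt, -⟩ := cons_iff.1 h
    exact absurd (hlt t ht) (Nat.not_lt_zero t)

theorem of_forall_lt (h : IsBlockSeq m L) (hn : ∀ β ∈ L, ∀ t ∈ β, t < n) : IsBlockSeq n L :=
  ⟨fun β hβ => ⟨(h.1 β hβ).1, hn β hβ⟩, h.2⟩

theorem mono (h : IsBlockSeq n L) (hnm : n ≤ m) : IsBlockSeq m L :=
  h.of_forall_lt fun β hβ t ht => ((h.1 β hβ).2 t ht).trans_le hnm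

theorem cases_succ (h : IsBlockSeq (n + 1) L) :
    IsBlockSeq n L ∨ (∃ M, L = {n} :: M ∧ IsBlockSeq n M) ∨
      ∃ β M, L = insert n β :: M ∧ IsBlockSeq n (β :: M) := by
  rcases L with _ | ⟨γ, M⟩
  · exact Or.inl (nil_iff_zero.2 rfl |>.mono (Nat.zero_le n))
  obtain ⟨⟨c, hc⟩, hγ, hM, hMγ⟩ := cons_iff.1 h
  have hM' : IsBlockSeq n M := hM.of_forall_lt fun δ hδ t ht =>
    (hMγ δ hδ t ht c hc).trans_le (Nat.lt_succ_iff.1 (hγ c hc))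
  by_cases hnγ : n ∈ γ
  · rcases (γ.erase n).eq_empty_or_nonempty with hβ | hβ
    · have : γ = {n} := ((Finset.erase_eq_empty_iff γ n).1 hβ).resolve_left
        (Finset.nonempty_iff_ne_empty.1 ⟨c, hc⟩)
      exact Or.inr (Or.inl ⟨M, by rw [this], hM'⟩)
    · refine Or.inr (Or.inr ⟨γ.erase n, M, by rw [Finset.insert_erase hnγ], ?_⟩)
      refine cons_iff.2 ⟨hβ, fun t ht => ?_, hM', fun δ hδ a ha b hb =>
        hMγ δ hδ a ha b (Finset.mem_of_mem_erase hb)⟩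
      have := hγ t (Finset.mem_of_mem_erase ht)
      have := Finset.ne_of_mem_erase ht
      omega
  · refine Or.inl (cons_iff.2 ⟨⟨c, hc⟩, fun t ht => ?_, hM', hMγ⟩)
    have := hγ t ht
    have : t ≠ n := fun h => hnγ (h ▸ ht)
    omega

theorem reverse_ofFn {k : ℕ} {α : Fin k → Finset ℕ} (hne : ∀ j, (α j).Nonempty)
    (hlt : ∀ j, ∀ t ∈ α j, t < n) (hinc : ∀ j j' : Fin k, j < j' → ∀ s ∈ α j, ∀ t ∈ α j', s < t) :
    IsBlockSeq n (List.ofFn α).reverse := by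
  refine ⟨fun β hβ => ?_, List.pairwise_reverse.2 (List.pairwise_ofFn.2 hinc)⟩
  obtain ⟨j, rfl⟩ := List.mem_ofFn.1 (List.mem_reverse.1 hβ)
  exact ⟨hne j, hlt j⟩

end IsBlockSeq

theorem finite_setOf_isBlockSeq (n k : ℕ) :
    {L | IsBlockSeq n L ∧ L.length ≤ k}.Finite :=
  (List.finite_length_le_of_forall_mem (Finset.range n).powerset.finite_toSet k).subset
    fun _ ⟨hL, hlen⟩ => ⟨hlen, fun β hβ => Finset.mem_coe.2 <| Finset.mem_powerset.2
      fun t ht => Finset.mem_range.2 <| (hL.1 β hβ).2 t ht⟩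

section BlockTree

variable {S : Type*} [Semigroup S]

theorem map_lProd_append {f : List S} (g : List S) {L : List (Finset ℕ)}
    (hL : IsBlockSeq f.length L) : L.map (lProd (f ++ g)) = L.map (lProd f) :=
  List.map_congr_left fun β hβ => lProd_append_of_forall_lt g (hL.1 β hβ).2

def blockTree (P : List S → Prop) (k : ℕ) : Set (List S) :=
  {f | ∀ L, IsBlockSeq f.length L → L.length ≤ k →
    ∀ q : List S, L.map (lProd f) = q.map (↑) → P q}

variable {P : List S → Prop} {k : ℕ}

theorem isTree_blockTree (hnil : P []) : IsTree (blockTree P k) := by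
  refine ⟨⟨[], fun L hL _ q hq => ?_⟩, ?_⟩
  · obtain rfl := IsBlockSeq.nil_iff_zero.1 hL
    obtain rfl := List.map_eq_nil_iff.1 hq.symm
    exact hnil
  · rintro g hg f ⟨g, rfl⟩ L hL hlen q hq
    exact hg L (hL.mono (by simp)) hlen q (by rwa [map_lProd_append _ hL])

theorem eventually_forall_isBlockSeq {e : Ultrafilter S} {f : List S}
    {Q : List (Finset ℕ) → List S → S → Prop}
    (h : ∀ L, IsBlockSeq f.length L → L.length ≤ k → ∀ q : List S,
      L.map (lProd f) = q.map (↑) → ∀ᶠ s in e, Q L q s) :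
    ∀ᶠ s in e, ∀ L, IsBlockSeq f.length L → L.length ≤ k → ∀ q : List S,
      L.map (lProd f) = q.map (↑) → Q L q s := by
  have hone : ∀ L ∈ {L | IsBlockSeq f.length L ∧ L.length ≤ k}, ∀ᶠ s in e, ∀ q : List S,
      L.map (lProd f) = q.map (↑) → Q L q s := by
    rintro L ⟨hL, hlen⟩
    by_cases hq : ∃ q : List S, L.map (lProd f) = q.map (↑)
    · obtain ⟨q, hq⟩ := hq
      filter_upwards [h L hL hlen q hq] with s hs q' hq'
      rwa [List.map_injective_iff.2 (fun _ _ => WithOne.coe_inj.1) (hq'.symm.trans hq)]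
    · exact .of_forall fun _ q hq' => (hq ⟨q, hq'⟩).elim
  filter_upwards [(Filter.eventually_all_finite (finite_setOf_isBlockSeq f.length k)).2 hone]
    with s hs L hL hlen using hs L ⟨hL, hlen⟩

theorem treeSucc_blockTree_mem {e : Ultrafilter S}
    (hcons : ∀ q, P q → q.length < k → ∀ᶠ s in e, P (s :: q))
    (hmul : ∀ t q, P (t :: q) → ∀ᶠ s in e, P (t * s :: q))
    {f : List S} (hf : f ∈ blockTree P k) : treeSucc (blockTree P k) f ∈ e := by
  have hnew := eventually_forall_isBlockSeq (e := e) (f := f) (k := k)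
    (Q := fun M q s => M.length < k → P (s :: q)) fun M hM hlen q hq => by
      by_cases hlt : M.length < k
      · have hlength : M.length = q.length := by simpa using congrArg List.length hq
        exact (hcons q (hf M hM hlen q hq) (hlength ▸ hlt)).mono fun _ hs _ => hs
      · exact .of_forall fun _ h => absurd h hlt
  have hext := eventually_forall_isBlockSeq (e := e) (f := f) (k := k)
    (Q := fun _ q s => ∀ t q', q = t :: q' → P (t * s :: q')) fun L hL hlen q hq => by
      rcases q with _ | ⟨t, q⟩
      · exact .of_forall fun _ _ _ h => (List.cons_ne_nil _ _ h.symm).elim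
      · filter_upwards [hmul t q (hf L hL hlen _ hq)] with s hs t' q' h
        obtain ⟨rfl, rfl⟩ := List.cons_eq_cons.1 h
        exact hs
  filter_upwards [hnew, hext] with s hnew hext L hL hlen p hp
  rw [List.length_append, List.length_singleton] at hL
  rcases hL.cases_succ with hold | ⟨M, rfl, hM⟩ | ⟨β, M, rfl, hβM⟩
  · exact hf L hold hlen p (by rwa [map_lProd_append _ hold] at hp)
  · rcases p with _ | ⟨x, q⟩
    · simp at hp
    simp only [List.map_cons, List.cons.injEq, map_lProd_append _ hM] at hp
    obtain rfl : s = x := by simpa [lProd_singleton_of_lt] using hp.1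
    exact hnew M hM (Nat.le_of_lt hlen) q hp.2 hlen
  · obtain ⟨hβ, hβlt, hM, -⟩ := IsBlockSeq.cons_iff.1 hβM
    obtain ⟨t, ht⟩ := exists_lProd_eq_coe hβ hβlt
    rcases p with _ | ⟨x, q⟩
    · simp at hp
    simp only [List.map_cons, List.cons.injEq, map_lProd_append _ hM,
      lProd_append_singleton_insert_length _ hβlt, ht] at hp
    obtain rfl : t * s = x := WithOne.coe_inj.1 hp.1
    exact hext _ hβM hlen (t :: q) (by simp [ht, hp.2]) t q rfl

end BlockTree

section StarSet

variable {S : Type*} [Semigroup S] {e : Ultrafilter S}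

def starSet (e : Ultrafilter S) (V : Set S) : Set S :=
  {s | s ∈ V ∧ ∀ᶠ t in e, s * t ∈ V}

theorem starSet_mem (hid : e * e = e) {V : Set S} (hV : V ∈ e) : starSet e V ∈ e :=
  Filter.inter_mem hV (show V ∈ e * e by rwa [hid])

theorem eventually_mul_mem_starSet (hid : e * e = e) {V : Set S} {s : S}
    (hs : s ∈ starSet e V) : ∀ᶠ t in e, s * t ∈ starSet e V :=
  Filter.mem_of_superset (starSet_mem hid hs.2) fun t ht => ⟨ht.1, by simpa [mul_assoc] using ht.2⟩

def IsStarChain (e : Ultrafilter S) (V : List S → Set S) : List S → Prop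
  | [] => True
  | x :: q => IsStarChain e V q ∧ x ∈ starSet e (V q)

variable {V : List S → Set S} {q : List S}

theorem IsStarChain.eventually_cons (hid : e * e = e) (hq : IsStarChain e V q) (hV : V q ∈ e) :
    ∀ᶠ s in e, IsStarChain e V (s :: q) :=
  Filter.mem_of_superset (starSet_mem hid hV) fun _ hs => ⟨hq, hs⟩

theorem IsStarChain.eventually_mul_cons (hid : e * e = e) {t : S}
    (h : IsStarChain e V (t :: q)) : ∀ᶠ s in e, IsStarChain e V (t * s :: q) :=
  Filter.mem_of_superset (eventually_mul_mem_starSet hid h.2) fun _ hs => ⟨h.1, hs⟩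

end StarSet

theorem Ultrafilter.eventually_notMem_of_ne_pure {α : Type*} {e : Ultrafilter α}
    (hnp : ∀ a, e ≠ pure a) {s : Set α} (hs : s.Finite) : ∀ᶠ a in e, a ∉ s :=
  e.compl_mem_iff_notMem.2 fun h =>
    let ⟨a, _, ha⟩ := e.eq_pure_of_finite_mem hs h
    hnp a ha

section EventualColors

variable {α ι : Type*} [DecidableEq α] (e : Ultrafilter α) (A : ι → Set (Finset α))

/-- `i ∈ eventualColors e A n l` iff, for `e`-almost all `a₁`, then `e`-almost all `a₂`, …,
the list `aₙ :: ⋯ :: a₁ :: l` consists of distinct elements and has colour `i`. -/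
def eventualColors : ℕ → List α → Set ι
  | 0, l => {i | l.Nodup ∧ l.toFinset ∈ A i}
  | n + 1, l => {i | ∀ᶠ a in e, i ∈ eventualColors n (a :: l)}

def colorExtensions (k : ℕ) (i : ι) (q : List α) : Set α :=
  {a | i ∈ eventualColors e A (k - (q.length + 1)) (a :: q)}

variable {e}

theorem eventualColors_nonempty [Finite ι] (hnp : ∀ a, e ≠ pure a) {k : ℕ}
    (hA : ∀ E : Finset α, E.card = k → ∃ i, E ∈ A i) :
    ∀ (n : ℕ) (l : List α), l.Nodup → l.length + n = k → (eventualColors e A n l).Nonempty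
  | 0, l, hl, hlen => (hA l.toFinset (by rw [List.toFinset_card_of_nodup hl]; exact hlen)).imp
      fun _ hi => ⟨hl, hi⟩
  | n + 1, l, hl, hlen => Ultrafilter.eventually_exists_iff.1 <|
      (Ultrafilter.eventually_notMem_of_ne_pure hnp l.finite_toSet).mono fun a ha =>
        eventualColors_nonempty hnp hA n (a :: l) (List.nodup_cons.2 ⟨ha, hl⟩)
          (by simp only [List.length_cons]; omega)

end EventualColors

section StarChainColors

variable {S ι : Type*} [Semigroup S] [DecidableEq S] {e : Ultrafilter S}
  {A : ι → Set (Finset S)} {k : ℕ} {i : ι} {q : List S}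

theorem IsStarChain.mem_eventualColors (hi : i ∈ eventualColors e A k []) :
    ∀ {q : List S}, IsStarChain e (colorExtensions e A k i) q →
      i ∈ eventualColors e A (k - q.length) q
  | [], _ => hi
  | _ :: _, h => h.2.1

theorem IsStarChain.colorExtensions_mem (hi : i ∈ eventualColors e A k [])
    (hq : IsStarChain e (colorExtensions e A k i) q) (hlt : q.length < k) :
    colorExtensions e A k i q ∈ e := by
  have := hq.mem_eventualColors hi
  rwa [show k - q.length = k - (q.length + 1) + 1 by omega] at this

end StarChainColors

theorem tree_ramsey_lemma_general
    {S : Type*} [Semigroup S] [DecidableEq S]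
    (e : Ultrafilter S) (hnp : ∀ s : S, e ≠ pure s) (hid : e * e = e)
    (k r : ℕ)
    (A : Fin r → Set (Finset S))
    (hA : {E : Finset S | E.card = k} = ⋃ i, A i) :
    ∃ (i : Fin r) (T : Set (List S)), IsTree T ∧
      ∀ f ∈ T,
        treeSucc T f ∈ e ∧
        ∀ α : Fin k → Finset ℕ,
          (∀ j, (α j).Nonempty) →
          (∀ j, ∀ t ∈ α j, t < f.length) →
          (∀ j j' : Fin k, j < j' → ∀ s ∈ α j, ∀ t ∈ α j', s < t) →
          ∃ p : Fin k → S,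
            (∀ j, (p j : WithOne S) = lProd f (α j)) ∧
            Finset.image p Finset.univ ∈ A i := by
  obtain ⟨i, hi⟩ := eventualColors_nonempty A hnp
    (fun E hE => Set.mem_iUnion.1 (hA ▸ hE)) k [] List.nodup_nil (by simp)
  let P := IsStarChain e (colorExtensions e A k i)
  have hcons : ∀ q, P q → q.length < k → ∀ᶠ s in e, P (s :: q) := fun _ hq hlt =>
    hq.eventually_cons hid (hq.colorExtensions_mem hi hlt)
  have hmul : ∀ t q, P (t :: q) → ∀ᶠ s in e, P (t * s :: q) := fun _ _ h =>
    h.eventually_mul_cons hid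
  refine ⟨i, blockTree P k, isTree_blockTree trivial, fun f hf =>
    ⟨treeSucc_blockTree_mem hcons hmul hf, fun α hne hlt hinc => ?_⟩⟩
  choose p hp using fun j => exists_lProd_eq_coe (hne j) (hlt j)
  refine ⟨p, fun j => (hp j).symm, ?_⟩
  have hP : P (List.ofFn p).reverse := hf _ (IsBlockSeq.reverse_ofFn hne hlt hinc) (by simp) _
    (by simp [List.map_ofFn, Function.comp_def, hp])
  have hfin := hP.mem_eventualColors hi
  rw [List.length_reverse, List.length_ofFn, Nat.sub_self] at hfin
  obtain ⟨-, hmem⟩ := hfin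
  convert hmem using 1
  ext
  simp

/-- Let `S` be a semigroup with a non-principal idempotent ultrafilter `e`, let
`k, r ≥ 1` and `[S]^k = A 0 ∪ … ∪ A (r-1)`.  Then there are `i` and a tree
`T ⊆ S^{<ω}` such that for all `f ∈ T` and all `α 1 < … < α k ⊆ dom f` in `P_f(ω)`:
(1) `T(f) ∈ e`, and (2) `{∏_{t∈α 1} f(t), …, ∏_{t∈α k} f(t)} ∈ A i`. -/
theorem tree_ramsey_lemma
    {S : Type*} [Semigroup S] [DecidableEq S]
    (e : Ultrafilter S) (hnp : ∀ s : S, e ≠ pure s) (hid : e * e = e)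
    (k r : ℕ) (hk : 1 ≤ k) (hr : 1 ≤ r)
    (A : Fin r → Set (Finset S))
    (hA : {E : Finset S | E.card = k} = ⋃ i, A i) :
    ∃ (i : Fin r) (T : Set (List S)), IsTree T ∧
      ∀ f ∈ T,
        treeSucc T f ∈ e ∧
        ∀ α : Fin k → Finset ℕ,
          (∀ j, (α j).Nonempty) →
          (∀ j, ∀ t ∈ α j, t < f.length) →
          (∀ j j' : Fin k, j < j' → ∀ s ∈ α j, ∀ t ∈ α j', s < t) →
          ∃ p : Fin k → S,
            (∀ j, (p j : WithOne S) = lProd f (α j)) ∧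
            Finset.image p Finset.univ ∈ A i :=
  tree_ramsey_lemma_general e hnp hid k r A hA
end

section
/- (Milliken–Taylor Theorem.) Let k, r ≥ 1 and let [ℕ]^k = A_1 ∪ … ∪ A_r. Then there exist i ∈ {1,…,r} and a sequence ⟨x_n⟩_{n=0}^∞ in ℕ such that [FS(⟨x_n⟩_{n=0}^∞)]^k_< ⊆ A_i. -/
/-!
Fix an idempotent ultrafilter `p` on `ℕ` containing every tail `(N, ∞)`. Extend a colouring `χ`
of lists of length `k` to shorter lists by `p`-limits: `w` gets the colour that `w ++ [y]` has for
`p`-almost every `y`. Hindman's construction then picks `x₀, x₁, …` so that every sum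
`∑_{t ∈ β} x t` lies in a prescribed `p`-large set that may depend on the subset sums of the terms
before `min β`; prescribing "keeps the limit colour of every short list of such earlier sums"
makes the colour constant along the block sums of any `α₁ < ⋯ < α_k`, so all of them get the
colour of the empty list.
-/

open Filter

attribute [local instance] Ultrafilter.add

namespace MillikenTaylor

section IteratedLimit

variable {M κ : Type*} [Finite κ] (p : Ultrafilter M)

noncomputable def limColour (f : M → κ) : κ := (p.map f).eq_pure_of_finite.choose

theorem limColour_mem (f : M → κ) : {y | f y = limColour p f} ∈ p := by
  have h : {limColour p f} ∈ p.map f := by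
    rw [(p.map f).eq_pure_of_finite.choose_spec]; rfl
  exact h

/-- `iterLimColour p χ d w` is the colour `w` is expected to get after appending `d` more entries;
the `stableSet` of `w` consists of the entries that do not change this expectation. -/
noncomputable def iterLimColour (χ : List M → κ) : ℕ → List M → κ
  | 0, w => χ w
  | d + 1, w => limColour p fun y => iterLimColour χ d (w ++ [y])

variable (χ : List M → κ) (k : ℕ)

def stableSet (w : List M) : Set M :=
  {y | iterLimColour p χ (k - (w.length + 1)) (w ++ [y]) = iterLimColour p χ (k - w.length) w}

theorem stableSet_mem {w : List M} (hw : w.length < k) : stableSet p χ k w ∈ p := by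
  have hk : k - w.length = k - (w.length + 1) + 1 := by omega
  simpa only [stableSet, hk, iterLimColour, eq_comm] using limColour_mem p _

theorem iterLimColour_eq_of_prefix (v : List M)
    (hv : ∀ w y, w ++ [y] <+: v → y ∈ stableSet p χ k w) :
    iterLimColour p χ (k - v.length) v = iterLimColour p χ k [] := by
  induction v using List.reverseRecOn with
  | nil => rfl
  | append_singleton w y ih =>
    rw [← ih fun u z h => hv u z (h.trans (List.prefix_append w [y])), List.length_append,
      List.length_singleton]
    exact hv w y List.prefix_rfl

end IteratedLimit

section AdaptedSequence

variable {M : Type*} [AddCommMonoid M] (p : Ultrafilter M)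

noncomputable def pivot (s : Set M) : M :=
  Classical.epsilon fun a => a ∈ s ∧ {m | a + m ∈ s} ∈ p

theorem pivot_spec (hp : p + p = p) {s : Set M} (hs : s ∈ p) :
    pivot p s ∈ s ∧ {m | pivot p s + m ∈ s} ∈ p := by
  have hshift : {a | {m | a + m ∈ s} ∈ p} ∈ p := by
    rw [← hp] at hs
    exact hs
  exact Classical.epsilon_spec (Ultrafilter.nonempty_of_mem (inter_mem hs hshift))

variable [DecidableEq M]

def subsetSums (x : ℕ → M) (n : ℕ) : Finset M :=
  (Finset.range n).powerset.image fun β => ∑ t ∈ β, x t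

theorem sum_mem_subsetSums {x : ℕ → M} {β : Finset ℕ} {n : ℕ} (h : β ⊆ Finset.range n) :
    ∑ t ∈ β, x t ∈ subsetSums x n :=
  Finset.mem_image_of_mem _ (Finset.mem_powerset.2 h)

theorem subsetSums_succ (x : ℕ → M) (n : ℕ) :
    subsetSums x (n + 1) = subsetSums x n ∪ (subsetSums x n).image (x n + ·) := by
  simp only [subsetSums, Finset.range_add_one, Finset.powerset_insert, Finset.image_union,
    Finset.image_image]
  congr 1
  refine Finset.image_congr fun β hβ => ?_
  have hn : n ∉ β := fun h => by simpa using Finset.mem_powerset.1 hβ h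
  simp [Finset.sum_insert hn]

variable (E : Finset M → Set M)

/-- The first component is `p`-large and contains every sum over a finite set with minimum `n`;
the second one is `subsetSums (adaptedSeq p E) n`. -/
noncomputable def stage : ℕ → Set M × Finset M
  | 0 => (E {0}, {0})
  | n + 1 =>
    let a := pivot p (stage n).1
    let F := (stage n).2 ∪ (stage n).2.image (a + ·)
    ((stage n).1 ∩ {m | a + m ∈ (stage n).1} ∩ E F, F)

noncomputable def adaptedSeq (n : ℕ) : M := pivot p (stage p E n).1

theorem stage_snd (n : ℕ) : (stage p E n).2 = subsetSums (adaptedSeq p E) n := by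
  induction n with
  | zero => rfl
  | succ n ih => rw [subsetSums_succ, ← ih]; rfl

theorem stage_fst_subset (n : ℕ) : (stage p E n).1 ⊆ E (subsetSums (adaptedSeq p E) n) := by
  rw [← stage_snd]
  cases n with
  | zero => exact subset_rfl
  | succ n => exact Set.inter_subset_right

theorem stage_fst_antitone : Antitone fun n => (stage p E n).1 :=
  antitone_nat_of_succ_le fun _ => Set.inter_subset_left.trans Set.inter_subset_left

variable {p E} (hp : p + p = p) (hE : ∀ F, E F ∈ p)
include hp hE

theorem stage_fst_mem (n : ℕ) : (stage p E n).1 ∈ p := by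
  induction n with
  | zero => exact hE _
  | succ n ih => exact inter_mem (inter_mem ih (pivot_spec p hp ih).2) (hE _)

theorem sum_mem_stage (β : Finset ℕ) (hβ : β.Nonempty) :
    ∑ t ∈ β, adaptedSeq p E t ∈ (stage p E (β.min' hβ)).1 := by
  induction β using Finset.induction_on_min with
  | empty => exact absurd hβ Finset.not_nonempty_empty
  | insert a β hlt ih =>
    have hmin : (insert a β).min' hβ = a :=
      le_antisymm (Finset.min'_le _ _ (Finset.mem_insert_self a β))
        (Finset.le_min' _ _ _ fun t ht =>
          (Finset.mem_insert.1 ht).elim ge_of_eq fun h => (hlt t h).le)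
    have hpivot := pivot_spec p hp (stage_fst_mem hp hE a)
    rw [hmin, Finset.sum_insert fun h => lt_irrefl a (hlt a h)]
    rcases β.eq_empty_or_nonempty with rfl | hne
    · simpa [adaptedSeq] using hpivot.1
    · have hsucc : a + 1 ≤ β.min' hne := hlt _ (β.min'_mem hne)
      exact (stage_fst_antitone p E hsucc (ih hne)).1.2

theorem adaptedSeq_sum_mem (β : Finset ℕ) (hβ : β.Nonempty) :
    ∑ t ∈ β, adaptedSeq p E t ∈ E (subsetSums (adaptedSeq p E) (β.min' hβ)) :=
  stage_fst_subset p E _ (sum_mem_stage hp hE β hβ)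

end AdaptedSequence

theorem Ioi_mem_of_add_self {p : Ultrafilter ℕ} (hp : p + p = p) (h0 : {0}ᶜ ∈ p) (N : ℕ) :
    Set.Ioi N ∈ p := by
  by_contra hN
  obtain ⟨a, -, rfl⟩ := Ultrafilter.eq_pure_of_finite_mem (Set.finite_Iic N)
    (by simpa using Ultrafilter.compl_mem_iff_notMem.2 hN)
  have haa : a + a = a := by
    have h : ({a} : Set ℕ) ∈ (pure a + pure a : Ultrafilter ℕ) := by rw [hp]; rfl
    exact h
  have ha : a ≠ 0 := Ultrafilter.mem_pure.1 h0
  omega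

theorem finite_setOf_length_lt_forall_mem {α : Type*} (F : Finset α) (k : ℕ) :
    {w : List α | w.length < k ∧ ∀ e ∈ w, e ∈ F}.Finite := by
  refine ((List.finite_length_lt F k).image (List.map Subtype.val)).subset fun w hw => ?_
  refine ⟨w.attach.map fun e => ⟨e.1, hw.2 _ e.2⟩, by simpa using hw.1, ?_⟩
  simp [List.map_map]

theorem pos_of_mem_FS {a : Stream' ℕ} (ha : ∀ i, 0 < a.get i) {m : ℕ} (hm : m ∈ Hindman.FS a) :
    0 < m := by
  induction hm with
  | head' a => exact ha 0
  | tail' a m _ ih => exact ih fun i => ha (i + 1)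
  | cons' a m _ _ => exact Nat.add_pos_left (ha 0) m

theorem exists_add_self_Ioi_mem : ∃ p : Ultrafilter ℕ, p + p = p ∧ ∀ N, Set.Ioi N ∈ p := by
  obtain ⟨p, hp, hFS⟩ := Hindman.exists_idempotent_ultrafilter_le_FS (Stream'.const 1)
  refine ⟨p, hp, Ioi_mem_of_add_self hp (mem_of_superset hFS fun m hm => ?_)⟩
  exact (pos_of_mem_FS (fun _ => Nat.one_pos) hm).ne'

theorem exists_of_append_singleton_prefix_ofFn {α : Type*} {n : ℕ} {f : Fin n → α}
    {w : List α} {y : α} (h : w ++ [y] <+: List.ofFn f) :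
    ∃ l : Fin n, y = f l ∧ w.length = l ∧ ∀ e ∈ w, ∃ j < l, f j = e := by
  have hlen : w.length < n := by simpa using h.length_le
  refine ⟨⟨w.length, hlen⟩, by simpa using h.getElem (i := w.length) (by simp), rfl,
    fun e he => ?_⟩
  obtain ⟨i, hi, rfl⟩ := List.getElem_of_mem he
  refine ⟨⟨i, hi.trans hlen⟩, hi, ?_⟩
  simpa using (((List.prefix_append w [y]).trans h).getElem hi).symm

theorem exists_seq_colour_ofFn_sums_eq {κ : Type*} [Finite κ] (k : ℕ) (χ : List ℕ → κ) :
    ∃ (c : κ) (x : ℕ → ℕ), (∀ n, 0 < x n) ∧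
      ∀ α : Fin k → Finset ℕ, (∀ j, (α j).Nonempty) →
        (∀ j j' : Fin k, j < j' → ∀ s ∈ α j, ∀ t ∈ α j', s < t) →
        StrictMono (fun j => ∑ t ∈ α j, x t) ∧ χ (List.ofFn fun j => ∑ t ∈ α j, x t) = c := by
  obtain ⟨p, hp, hIoi⟩ := exists_add_self_Ioi_mem
  set E : Finset ℕ → Set ℕ := fun F =>
    {y | ∀ f ∈ F, f < y} ∩ ⋂ w ∈ {w : List ℕ | w.length < k ∧ ∀ e ∈ w, e ∈ F}, stableSet p χ k w
  have hE : ∀ F, E F ∈ p := by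
    intro F
    refine inter_mem ?_ ((biInter_mem (finite_setOf_length_lt_forall_mem F k)).2
      fun w hw => stableSet_mem p χ k hw.1)
    obtain ⟨N, hN⟩ := F.bddAbove
    exact mem_of_superset (hIoi N) fun y hy f hf => (hN hf).trans_lt hy
  set x := adaptedSeq p E
  have hx := adaptedSeq_sum_mem hp hE
  refine ⟨iterLimColour p χ k [], x, fun n => ?_, fun α hne hlt => ?_⟩
  · have hzero : 0 ∈ subsetSums x n := sum_mem_subsetSums (Finset.empty_subset _)
    simpa using (hx {n} (Finset.singleton_nonempty n)).1 0 hzero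
  set S : Fin k → ℕ := fun j => ∑ t ∈ α j, x t
  have hearlier : ∀ j j', j < j' → S j ∈ subsetSums x ((α j').min' (hne j')) := fun j j' h =>
    sum_mem_subsetSums fun t ht => Finset.mem_range.2 (hlt j j' h t ht _ (Finset.min'_mem _ _))
  have hS : ∀ j, S j ∈ E (subsetSums x ((α j).min' (hne j))) := fun j => hx _ _
  refine ⟨fun j j' h => (hS j').1 _ (hearlier j j' h), ?_⟩
  have hcolour := iterLimColour_eq_of_prefix p χ k (List.ofFn S) fun w y hwy => by
    obtain ⟨l, rfl, hl, hw⟩ := exists_of_append_singleton_prefix_ofFn hwy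
    refine Set.mem_iInter₂.1 (hS l).2 w ⟨?_, fun e he => ?_⟩
    · exact hl ▸ l.2
    · obtain ⟨j, hj, rfl⟩ := hw e he
      exact hearlier j l hj
  simpa [iterLimColour] using hcolour

end MillikenTaylor

theorem milliken_taylor_general
    (k r : ℕ) (hr : 1 ≤ r)
    (A : Fin r → Set (Finset ℕ+))
    (hA : {E : Finset ℕ+ | E.card = k} = ⋃ i, A i) :
    ∃ (i : Fin r) (x : ℕ → ℕ+),
      ∀ α : Fin k → Finset ℕ,
        (∀ j, (α j).Nonempty) →
        (∀ j j' : Fin k, j < j' → ∀ s ∈ α j, ∀ t ∈ α j', s < t) →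
        ∃ p : Fin k → ℕ+,
          (∀ j, (p j : ℕ) = ∑ t ∈ α j, (x t : ℕ)) ∧
          Finset.image p Finset.univ ∈ A i := by
  have : Nonempty (Fin r) := ⟨⟨0, hr⟩⟩
  let χ : List ℕ → Fin r := fun w => Classical.epsilon fun i => (w.map Nat.toPNat').toFinset ∈ A i
  obtain ⟨i, x, hx, hsums⟩ := MillikenTaylor.exists_seq_colour_ofFn_sums_eq k χ
  refine ⟨i, fun n => ⟨x n, hx n⟩, fun α hne hlt => ?_⟩
  obtain ⟨hmono, hχ⟩ := hsums α hne hlt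
  set S : Fin k → ℕ := fun j => ∑ t ∈ α j, x t
  have hSpos : ∀ j, 0 < S j := fun j => Finset.sum_pos (fun t _ => hx t) (hne j)
  have hP : ∀ j, ((S j).toPNat' : ℕ) = S j := fun j => by simp [hSpos j]
  have himage : ((List.ofFn S).map Nat.toPNat').toFinset =
      Finset.image (fun j => (S j).toPNat') Finset.univ := by
    ext; simp [List.mem_ofFn]
  have hcard : (Finset.image (fun j => (S j).toPNat') Finset.univ).card = k := by
    rw [Finset.card_image_of_injective _ fun j j' h =>
      hmono.injective (by simpa [hP] using congrArg PNat.val h)]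
    simp
  refine ⟨fun j => (S j).toPNat', hP, ?_⟩
  have hmem : (Finset.image (fun j => (S j).toPNat') Finset.univ) ∈ ⋃ i, A i := hA ▸ hcard
  rw [← hχ, ← himage]
  exact Classical.epsilon_spec (Set.mem_iUnion.1 (himage ▸ hmem))

/-- **The Milliken–Taylor Theorem.**  (`ℕ+` is the set of positive integers.)
Let `k, r ≥ 1` and let `[ℕ]^k = A 0 ∪ … ∪ A (r-1)`.  Then there are `i` and a
sequence `⟨x n⟩ₙ` of positive integers such that
`[FS(⟨x n⟩ₙ)]^k_< = {{∑_{t∈α 1} x t, …, ∑_{t∈α k} x t} : α 1 < … < α k ∈ P_f(ω)} ⊆ A i`. -/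
theorem milliken_taylor
    (k r : ℕ) (hk : 1 ≤ k) (hr : 1 ≤ r)
    (A : Fin r → Set (Finset ℕ+))
    (hA : {E : Finset ℕ+ | E.card = k} = ⋃ i, A i) :
    ∃ (i : Fin r) (x : ℕ → ℕ+),
      ∀ α : Fin k → Finset ℕ,
        (∀ j, (α j).Nonempty) →
        (∀ j j' : Fin k, j < j' → ∀ s ∈ α j, ∀ t ∈ α j', s < t) →
        ∃ p : Fin k → ℕ+,
          (∀ j, (p j : ℕ) = ∑ t ∈ α j, (x t : ℕ)) ∧
          Finset.image p Finset.univ ∈ A i :=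
  milliken_taylor_general k r hr A hA
end

section
/- Let (S,·) be a semigroup such that there exists a non-principal idempotent ultrafilter e on S, and for each m ∈ {1,…,k} let [S]^m be finitely coloured. Then there exist, for each m ∈ {1,…,k}, a monochrome set A^{(m)} ⊆ [S]^m, and a single tree T ⊆ S^{<ω} such that for all f ∈ T one has T(f) ∈ e, and for every m ∈ {1,…,k} and all α_1 < α_2 < … < α_m ⊆ dom f with each α_j ∈ P_f(ω) one has {∏_{t∈α_1} f(t), ∏_{t∈α_2} f(t), …, ∏_{t∈α_m} f(t)} ∈ A^{(m)}. -/
/-!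
For each `m`, iterating an ultrafilter version of Ramsey's theorem along `e` gives a colour
`i m` and a set `G` of finite sequences, containing `[]` and with `e`-many one-step
extensions of each of its members, whose members of length `m + 1` are injective of colour
`i m`. The tree consists of the `f` such that in every sequence `q ++ [x]` of products over
blocks `α₁ < ⋯ < αⱼ` in `dom f`, the last product `x` lies in `A⋆ = {y ∈ A : y⁻¹A ∈ e}` for
`A = {y | q ++ [y] ∈ G}`. As `e` is idempotent, `A⋆ ∈ e` and `x⁻¹A⋆ ∈ e` for `x ∈ A⋆`, so
`e`-many `s` can be appended to such an `f`, whether `s` opens a new block or is multiplied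
onto the last one. All block-product sequences of a member of the tree then lie in `G`.
-/

/- The semigroup structure on `βS = Ultrafilter S`, with
`A ∈ p * q ↔ {s | {t | s * t ∈ A} ∈ q} ∈ p`. -/
attribute [local instance] Ultrafilter.mul Ultrafilter.semigroup

namespace TreeRamsey

open Filter

variable {S : Type*}

section Idempotent

variable [Semigroup S] {e : Ultrafilter S}

def starSet (e : Ultrafilter S) (A : Set S) : Set S :=
  {x | x ∈ A ∧ ∀ᶠ y in e, x * y ∈ A}

lemma eventually_eventually_mul (hid : e * e = e) {P : S → Prop} (h : ∀ᶠ x in e, P x) :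
    ∀ᶠ x in e, ∀ᶠ y in e, P (x * y) := by
  rw [← hid] at h
  exact (Ultrafilter.eventually_mul e e P).1 h

lemma starSet_mem (hid : e * e = e) {A : Set S} (hA : A ∈ e) : starSet e A ∈ e :=
  Eventually.and hA (eventually_eventually_mul hid hA)

lemma eventually_mul_mem_starSet (hid : e * e = e) {A : Set S} {x : S} (hx : x ∈ starSet e A) :
    ∀ᶠ y in e, x * y ∈ starSet e A := by
  filter_upwards [hx.2, eventually_eventually_mul hid hx.2] with y hy hyz
  exact ⟨hy, by simpa only [mul_assoc] using hyz⟩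

end Idempotent

section Branching

variable {e : Ultrafilter S}

def IsBranching (e : Ultrafilter S) (G : Set (List S)) : Prop :=
  [] ∈ G ∧ ∀ l ∈ G, treeSucc G l ∈ e

lemma IsBranching.inter {G G' : Set (List S)} (h : IsBranching e G) (h' : IsBranching e G') :
    IsBranching e (G ∩ G') :=
  ⟨⟨h.1, h'.1⟩, fun l hl => inter_mem (h.2 l hl.1) (h'.2 l hl.2)⟩

lemma isBranching_iInter {ι : Type*} [Finite ι] {G : ι → Set (List S)}
    (h : ∀ i, IsBranching e (G i)) : IsBranching e (⋂ i, G i) := by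
  refine ⟨Set.mem_iInter.2 fun i => (h i).1, fun l hl => ?_⟩
  have hsucc : treeSucc (⋂ i, G i) l = ⋂ i, treeSucc (G i) l := by
    ext x; simp [treeSucc]
  rw [hsucc]
  exact iInter_mem.2 fun i => (h i).2 l (Set.mem_iInter.1 hl i)

lemma isBranching_nodup (hnp : ∀ s, e ≠ pure s) : IsBranching e {l : List S | l.Nodup} := by
  refine ⟨List.nodup_nil, fun l hl => ?_⟩
  have hcof : (e : Filter S) ≤ cofinite :=
    e.le_cofinite_or_eq_pure.resolve_right fun ⟨s, hs⟩ => hnp s hs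
  filter_upwards [hcof l.finite_toSet.compl_mem_cofinite] with x hx
  show (l ++ [x]).Nodup
  rw [← List.concat_eq_append]
  exact (List.nodup_concat l x).2 ⟨hx, hl⟩

/-- Ramsey's theorem for iterated ultrafilter limits: induct on `n`, colouring each `x` by
the colour obtained for the lists that start with `x`, and keep the `e`-large colour class. -/
lemma exists_isBranching_monochromatic {N : ℕ} (χ : List S → Fin N) (n : ℕ) :
    ∃ i G, IsBranching e G ∧ ∀ l ∈ G, l.length = n → χ l = i := by
  induction n generalizing χ with
  | zero =>
    refine ⟨χ [], Set.univ, ⟨trivial, fun _ _ => univ_mem⟩, fun l _ hl => ?_⟩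
    rw [List.length_eq_zero_iff.1 hl]
  | succ n ih =>
    choose j G hG hχ using fun x => ih fun l => χ (x :: l)
    obtain ⟨i, hi⟩ : ∃ i, ∀ᶠ x in e, j x = i :=
      Ultrafilter.eventually_exists_iff.1 (Eventually.of_forall fun x => ⟨j x, rfl⟩)
    refine ⟨i, {l | match l with | [] => True | x :: t => j x = i ∧ t ∈ G x}, ⟨trivial, ?_⟩, ?_⟩
    · rintro (_ | ⟨x, t⟩) hl
      · filter_upwards [hi] with x hx using ⟨hx, (hG x).1⟩
      · filter_upwards [(hG x).2 t hl.2] with y hy using ⟨hl.1, hy⟩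
    · rintro (_ | ⟨x, t⟩) hl hlen
      · simp at hlen
      · exact hl.1 ▸ hχ x t hl.2 (by simpa using hlen)

lemma exists_isBranching_nodup_monochromatic (hnp : ∀ s, e ≠ pure s) {ι : Type*} [Finite ι]
    (n : ι → ℕ) {r : ι → ℕ} (c : (m : ι) → List S → Fin (r m)) :
    ∃ (i : (m : ι) → Fin (r m)) (G : Set (List S)), IsBranching e G ∧
      ∀ m, ∀ l ∈ G, l.length = n m → l.Nodup ∧ c m l = i m := by
  choose i G hG hc using fun m => exists_isBranching_monochromatic (e := e) (c m) (n m)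
  exact ⟨i, {l | l.Nodup} ∩ ⋂ m, G m, (isBranching_nodup hnp).inter (isBranching_iInter hG),
    fun m l hl hlen => ⟨hl.1, hc m l (Set.mem_iInter.1 hl.2 m) hlen⟩⟩

end Branching

section Blocks

variable [Semigroup S]

lemma lProd_append_of_lt {f : List S} (g : List S) {α : Finset ℕ} (h : ∀ t ∈ α, t < f.length) :
    lProd (f ++ g) α = lProd f α := by
  unfold lProd oListProd
  congr 1
  refine List.map_congr_left fun t ht => ?_
  rw [List.getElem?_append_left (h t ((Finset.mem_sort _).1 ht))]

lemma sort_insert_of_lt {β : Finset ℕ} {n : ℕ} (h : ∀ t ∈ β, t < n) :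
    (insert n β).sort (· ≤ ·) = β.sort (· ≤ ·) ++ [n] := by
  have hn : n ∉ β := fun hn => lt_irrefl _ (h n hn)
  refine List.Perm.eq_of_pairwise' (Finset.pairwise_sort _ _) ?_ ?_
  · refine List.pairwise_append.2 ⟨Finset.pairwise_sort _ _, List.pairwise_singleton _ _, ?_⟩
    intro a ha b hb
    rw [List.mem_singleton.1 hb]
    exact (h a ((Finset.mem_sort _).1 ha)).le
  · exact ((Finset.sort_perm_toList _ _).trans (Finset.toList_insert hn)).trans
      (((Finset.sort_perm_toList _ _).symm.cons n).trans (List.perm_append_singleton _ _).symm)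

lemma lProd_concat_insert_length {f : List S} (s : S) {β : Finset ℕ}
    (h : ∀ t ∈ β, t < f.length) :
    lProd (f ++ [s]) (insert f.length β) = lProd f β * s := by
  rw [← lProd_append_of_lt [s] h]
  unfold lProd oListProd
  rw [sort_insert_of_lt h, List.map_append, List.prod_append]
  simp

def IsBlockSeq {n : ℕ} (N : ℕ) (α : Fin n → Finset ℕ) : Prop :=
  (∀ j, (α j).Nonempty) ∧ (∀ j, ∀ t ∈ α j, t < N) ∧ ∀ j j', j < j' → ∀ s ∈ α j, ∀ t ∈ α j', s < t

lemma isBlockSeq_snoc {n N : ℕ} {α : Fin n → Finset ℕ} {A : Finset ℕ} :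
    IsBlockSeq N (Fin.snoc α A : Fin (n + 1) → Finset ℕ) ↔ IsBlockSeq N α ∧ A.Nonempty ∧
      (∀ t ∈ A, t < N) ∧ ∀ j, ∀ s ∈ α j, ∀ t ∈ A, s < t := by
  constructor
  · rintro ⟨hne, hlt, hmono⟩
    refine ⟨⟨fun j => ?_, fun j => ?_, fun j j' hj => ?_⟩, ?_, ?_, fun j => ?_⟩
    · simpa using hne j.castSucc
    · simpa using hlt j.castSucc
    · simpa using hmono _ _ (Fin.castSucc_lt_castSucc_iff.2 hj)
    · simpa using hne (Fin.last n)
    · simpa using hlt (Fin.last n)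
    · simpa using hmono _ _ (Fin.castSucc_lt_last j)
  · rintro ⟨⟨hne, hlt, hmono⟩, hAne, hAlt, hαA⟩
    refine ⟨Fin.lastCases (by simpa) (by simpa), Fin.lastCases (by simpa) (by simpa), ?_⟩
    intro j j' hj
    induction j using Fin.lastCases with
    | last => exact absurd hj (not_lt.2 (Fin.le_last j'))
    | cast j =>
      induction j' using Fin.lastCases with
      | last => simpa using hαA j
      | cast j' => simpa using hmono j j' (Fin.castSucc_lt_castSucc_iff.1 hj)

lemma IsBlockSeq.length_mem_last {n N t : ℕ} {α : Fin (n + 1) → Finset ℕ}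
    (h : IsBlockSeq (N + 1) α) {j : Fin (n + 1)} (ht : t ∈ α j) (hle : N ≤ t) :
    N ∈ α (Fin.last n) := by
  obtain ⟨u, hu⟩ := h.1 (Fin.last n)
  rcases (Fin.le_last j).lt_or_eq with hj | rfl
  · have := h.2.2 _ _ hj t ht u hu
    have := h.2.1 _ u hu
    omega
  · obtain rfl : t = N := by have := h.2.1 _ t ht; omega
    exact ht

end Blocks

section BlockProducts

variable [Semigroup S] [DecidableEq S]

/-- The finite set of sequences `(∏_{t∈α₁} f(t), …, ∏_{t∈αⱼ} f(t))`, `j ≥ 0`, over all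
blocks `α₁ < ⋯ < αⱼ` in `dom f`: the next entry `s` of `f` is unused, forms a new last
block, or joins the last block. -/
def blockProds (f : List S) : Finset (List S) :=
  f.foldl (fun Q s => Q ∪ Q.image (· ++ [s]) ∪ Q.image (List.modifyLast (· * s)))
    ({[]} : Finset (List S))

lemma blockProds_nil : blockProds ([] : List S) = {[]} := rfl

lemma blockProds_append_subset (f g : List S) : blockProds f ⊆ blockProds (f ++ g) := by
  rw [blockProds, blockProds, List.foldl_append]
  generalize List.foldl _ _ f = Q
  induction g generalizing Q with
  | nil => exact subset_rfl
  | cons s g ih =>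
    exact (Finset.subset_union_left.trans Finset.subset_union_left).trans (ih _)

lemma mem_blockProds_concat {f q : List S} {s : S} :
    q ∈ blockProds (f ++ [s]) ↔ q ∈ blockProds f ∨ (∃ q' ∈ blockProds f, q = q' ++ [s]) ∨
      ∃ q' x, q' ++ [x] ∈ blockProds f ∧ q = q' ++ [x * s] := by
  have hstep : blockProds (f ++ [s]) = blockProds f ∪ (blockProds f).image (· ++ [s]) ∪
      (blockProds f).image (List.modifyLast (· * s)) := by
    rw [blockProds, List.foldl_append]; rfl
  simp only [hstep, Finset.mem_union, Finset.mem_image, or_assoc]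
  constructor
  · rintro (hq | ⟨q', hq', rfl⟩ | ⟨q', hq', rfl⟩)
    · exact .inl hq
    · exact .inr (.inl ⟨q', hq', rfl⟩)
    · rcases q'.eq_nil_or_concat' with rfl | ⟨q', x, rfl⟩
      · exact .inl hq'
      · exact .inr (.inr ⟨q', x, hq', List.modifyLast_concat _ _ _⟩)
  · rintro (hq | ⟨q', hq', rfl⟩ | ⟨q', x, hq', rfl⟩)
    · exact .inl hq
    · exact .inr (.inl ⟨q', hq', rfl⟩)
    · exact .inr (.inr ⟨_, hq', List.modifyLast_concat _ _ _⟩)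

lemma ofFn_snoc {β : Type*} {n : ℕ} (p : Fin n → β) (x : β) :
    List.ofFn (Fin.snoc p x : Fin (n + 1) → β) = List.ofFn p ++ [x] := by
  rw [List.ofFn_succ']
  simp

lemma blockProds_concat_of_new_block {f : List S} (s : S) {n : ℕ} {α : Fin n → Finset ℕ}
    {p : Fin n → S} (hα : ∀ j, ∀ t ∈ α j, t < f.length)
    (hp : ∀ j, (p j : WithOne S) = lProd f (α j)) (hpQ : List.ofFn p ∈ blockProds f) :
    (∀ j, ((Fin.snoc p s : Fin (n + 1) → S) j : WithOne S) =
      lProd (f ++ [s]) ((Fin.snoc α {f.length} : Fin (n + 1) → Finset ℕ) j)) ∧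
    List.ofFn (Fin.snoc p s : Fin (n + 1) → S) ∈ blockProds (f ++ [s]) := by
  refine ⟨fun j => ?_, ?_⟩
  · induction j using Fin.lastCases with
    | last =>
      rw [Fin.snoc_last, Fin.snoc_last, ← insert_empty_eq,
        lProd_concat_insert_length s (by simp)]
      simp [lProd, oListProd]
    | cast j => simp [hp, lProd_append_of_lt _ (hα j)]
  · rw [ofFn_snoc]
    exact mem_blockProds_concat.2 (.inr (.inl ⟨_, hpQ, rfl⟩))

lemma blockProds_concat_of_join_block {f : List S} (s : S) {n : ℕ} {α : Fin n → Finset ℕ}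
    {B : Finset ℕ} {p : Fin (n + 1) → S} (hα : ∀ j, ∀ t ∈ α j, t < f.length)
    (hB : ∀ t ∈ B, t < f.length)
    (hp : ∀ j, (p j : WithOne S) = lProd f ((Fin.snoc α B : Fin (n + 1) → Finset ℕ) j))
    (hpQ : List.ofFn p ∈ blockProds f) :
    (∀ j, ((Fin.snoc (Fin.init p) (p (Fin.last n) * s) : Fin (n + 1) → S) j : WithOne S) =
      lProd (f ++ [s]) ((Fin.snoc α (insert f.length B) : Fin (n + 1) → Finset ℕ) j)) ∧
    List.ofFn (Fin.snoc (Fin.init p) (p (Fin.last n) * s) : Fin (n + 1) → S) ∈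
      blockProds (f ++ [s]) := by
  refine ⟨fun j => ?_, ?_⟩
  · induction j using Fin.lastCases with
    | last =>
      have hlast := hp (Fin.last n)
      rw [Fin.snoc_last] at hlast
      rw [Fin.snoc_last, Fin.snoc_last, WithOne.coe_mul, hlast, lProd_concat_insert_length s hB]
    | cast j =>
      have hj := hp j.castSucc
      rw [Fin.snoc_castSucc] at hj
      simp [Fin.init, hj, lProd_append_of_lt _ (hα j)]
  · rw [← Fin.snoc_init_self p, ofFn_snoc] at hpQ
    rw [ofFn_snoc]
    exact mem_blockProds_concat.2 (.inr (.inr ⟨_, _, hpQ, rfl⟩))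

lemma exists_ofFn_mem_blockProds (f : List S) {n : ℕ} {α : Fin n → Finset ℕ}
    (h : IsBlockSeq f.length α) :
    ∃ p : Fin n → S, (∀ j, (p j : WithOne S) = lProd f (α j)) ∧ List.ofFn p ∈ blockProds f := by
  induction f using List.reverseRecOn generalizing n with
  | nil =>
    cases n with
    | zero => exact ⟨Fin.elim0, fun j => j.elim0, by simp [blockProds_nil]⟩
    | succ n =>
      obtain ⟨t, ht⟩ := h.1 0
      exact absurd (h.2.1 0 t ht) (Nat.not_lt_zero t)
  | append_singleton f s ih =>
    rw [List.length_append, List.length_singleton] at h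
    by_cases hbelow : ∀ j, ∀ t ∈ α j, t < f.length
    · obtain ⟨p, hp, hpQ⟩ := ih ⟨h.1, hbelow, h.2.2⟩
      exact ⟨p, fun j => (hp j).trans (lProd_append_of_lt _ (hbelow j)).symm,
        blockProds_append_subset f [s] hpQ⟩
    cases n with
    | zero => exact absurd (fun j => j.elim0) hbelow
    | succ n =>
      simp only [not_forall, not_lt] at hbelow
      obtain ⟨j, t, ht, hle⟩ := hbelow
      have hN := h.length_mem_last ht hle
      obtain ⟨α, A, rfl⟩ : ∃ α' A, α = Fin.snoc α' A := ⟨_, _, (Fin.snoc_init_self α).symm⟩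
      rw [Fin.snoc_last] at hN
      obtain ⟨hα, -, hAlt, hαA⟩ := isBlockSeq_snoc.1 h
      have hαN : IsBlockSeq f.length α := ⟨hα.1, fun j t ht => hαA j t ht _ hN, hα.2.2⟩
      rw [← Finset.insert_erase hN]
      rcases (A.erase f.length).eq_empty_or_nonempty with hB | hB
      · obtain ⟨p, hp, hpQ⟩ := ih hαN
        rw [hB, insert_empty_eq]
        exact ⟨_, blockProds_concat_of_new_block s hαN.2.1 hp hpQ⟩
      · have hBlt : ∀ t ∈ A.erase f.length, t < f.length := fun t ht =>
          lt_of_le_of_ne (Nat.le_of_lt_succ (hAlt t (Finset.mem_of_mem_erase ht)))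
            (Finset.ne_of_mem_erase ht)
        obtain ⟨p, hp, hpQ⟩ := ih (isBlockSeq_snoc.2 ⟨hαN, hB, hBlt,
          fun j t ht v hv => hαA j t ht v (Finset.mem_of_mem_erase hv)⟩)
        exact ⟨_, blockProds_concat_of_join_block s hαN.2.1 hBlt hp hpQ⟩

end BlockProducts

section Tree

variable [Semigroup S] [DecidableEq S] {e : Ultrafilter S} {G : Set (List S)}

def blockTree (e : Ultrafilter S) (G : Set (List S)) : Set (List S) :=
  {f | ∀ q x, q ++ [x] ∈ blockProds f → x ∈ starSet e (treeSucc G q)}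

lemma isTree_blockTree : IsTree (blockTree e G) := by
  refine ⟨⟨[], fun q x hq => ?_⟩, ?_⟩
  · simp [blockProds_nil] at hq
  · rintro g hg f ⟨f', rfl⟩ q x hq
    exact hg q x (blockProds_append_subset f f' hq)

lemma blockProds_subset_of_mem_blockTree (hG : [] ∈ G) {f : List S} (hf : f ∈ blockTree e G) :
    ↑(blockProds f) ⊆ G := by
  intro q hq
  rcases q.eq_nil_or_concat' with rfl | ⟨q, x, rfl⟩
  · exact hG
  · exact (hf q x hq).1

lemma treeSucc_blockTree_mem (hid : e * e = e) (hG : IsBranching e G) {f : List S}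
    (hf : f ∈ blockTree e G) : treeSucc (blockTree e G) f ∈ e := by
  have hnew : ∀ q ∈ blockProds f, ∀ᶠ s in e, s ∈ starSet e (treeSucc G q) := fun q hq =>
    starSet_mem hid (hG.2 q (blockProds_subset_of_mem_blockTree hG.1 hf hq))
  have hjoin : ∀ q ∈ blockProds f, ∀ᶠ s in e,
      ∀ q' x, q = q' ++ [x] → x * s ∈ starSet e (treeSucc G q') := by
    intro q hq
    rcases q.eq_nil_or_concat' with rfl | ⟨q, x, rfl⟩
    · exact Eventually.of_forall fun s q' x h => by simp at h
    · filter_upwards [eventually_mul_mem_starSet hid (hf q x hq)] with s hs q' x' h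
      obtain ⟨rfl, rfl⟩ := List.append_singleton_inj.1 h
      exact hs
  filter_upwards [(Finset.eventually_all _).2 hnew, (Finset.eventually_all _).2 hjoin]
    with s hsnew hsjoin q x hq
  rcases mem_blockProds_concat.1 hq with hq | ⟨q', hq', h⟩ | ⟨q', y, hq', h⟩
  · exact hf q x hq
  · obtain ⟨rfl, rfl⟩ := List.append_singleton_inj.1 h
    exact hsnew q hq'
  · obtain ⟨rfl, rfl⟩ := List.append_singleton_inj.1 h
    exact hsjoin _ hq' q y rfl

theorem exists_isTree_blockProds_subset (hid : e * e = e) (hG : IsBranching e G) :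
    ∃ T, IsTree T ∧ ∀ f ∈ T, treeSucc T f ∈ e ∧ ↑(blockProds f) ⊆ G :=
  ⟨blockTree e G, isTree_blockTree, fun _ hf =>
    ⟨treeSucc_blockTree_mem hid hG hf, blockProds_subset_of_mem_blockTree hG.1 hf⟩⟩

end Tree

end TreeRamsey

open TreeRamsey

theorem simultaneous_tree_ramsey_lemma_general
    {S : Type*} [Semigroup S] [DecidableEq S]
    (e : Ultrafilter S) (hnp : ∀ s : S, e ≠ pure s) (hid : e * e = e)
    (k : ℕ) (r : Fin k → ℕ)
    (c : (m : Fin k) → Finset S → Fin (r m)) :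
    ∃ (i : (m : Fin k) → Fin (r m)) (T : Set (List S)), IsTree T ∧
      ∀ f ∈ T,
        treeSucc T f ∈ e ∧
        ∀ m : Fin k, ∀ α : Fin (m.1 + 1) → Finset ℕ,
          (∀ j, (α j).Nonempty) →
          (∀ j, ∀ t ∈ α j, t < f.length) →
          (∀ j j' : Fin (m.1 + 1), j < j' → ∀ s ∈ α j, ∀ t ∈ α j', s < t) →
          ∃ p : Fin (m.1 + 1) → S,
            (∀ j, (p j : WithOne S) = lProd f (α j)) ∧
            (Finset.image p Finset.univ).card = m.1 + 1 ∧
            c m (Finset.image p Finset.univ) = i m := by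
  obtain ⟨i, G, hG, hGc⟩ := exists_isBranching_nodup_monochromatic hnp (fun m : Fin k => m.1 + 1)
    fun m l => c m l.toFinset
  obtain ⟨T, hT, hTG⟩ := exists_isTree_blockProds_subset hid hG
  refine ⟨i, T, hT, fun f hf => ⟨(hTG f hf).1, fun m α hne hlt hmono => ?_⟩⟩
  obtain ⟨p, hp, hpQ⟩ := exists_ofFn_mem_blockProds f ⟨hne, hlt, hmono⟩
  obtain ⟨hnodup, hcol⟩ := hGc m _ ((hTG f hf).2 hpQ) (List.length_ofFn)
  have himage : (List.ofFn p).toFinset = Finset.image p Finset.univ := by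
    ext
    simp only [List.mem_toFinset, List.mem_ofFn, Finset.mem_image, Finset.mem_univ, true_and]
  refine ⟨p, hp, ?_, himage ▸ hcol⟩
  rw [← himage, List.toFinset_card_of_nodup hnodup, List.length_ofFn]

/-- **Simultaneous tree lemma.**  Let `S` be a semigroup with a non-principal
idempotent ultrafilter `e`, and for each `m ∈ {1,…,k}` (indexed by `m : Fin k`,
standing for `m+1`) let `[S]^{m+1}` be coloured by `c m : [S]^{m+1} → Fin (r m)`.
Then there are colours `i m` (determining the monochrome sets
`A^{(m+1)} ⊆ [S]^{m+1}` of colour `i m`) and a single tree `T ⊆ S^{<ω}` such that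
for every `f ∈ T` one has `T(f) ∈ e`, and for every `m` and all
`α 1 < … < α (m+1) ⊆ dom f` in `P_f(ω)` the set
`{∏_{t∈α 1} f(t), …, ∏_{t∈α (m+1)} f(t)}` has `m+1` elements and colour `i m`. -/
theorem simultaneous_tree_ramsey_lemma
    {S : Type*} [Semigroup S] [DecidableEq S]
    (e : Ultrafilter S) (hnp : ∀ s : S, e ≠ pure s) (hid : e * e = e)
    (k : ℕ) (r : Fin k → ℕ) (hr : ∀ m, 1 ≤ r m)
    (c : (m : Fin k) → Finset S → Fin (r m)) :
    ∃ (i : (m : Fin k) → Fin (r m)) (T : Set (List S)), IsTree T ∧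
      ∀ f ∈ T,
        treeSucc T f ∈ e ∧
        ∀ m : Fin k, ∀ α : Fin (m.1 + 1) → Finset ℕ,
          (∀ j, (α j).Nonempty) →
          (∀ j, ∀ t ∈ α j, t < f.length) →
          (∀ j j' : Fin (m.1 + 1), j < j' → ∀ s ∈ α j, ∀ t ∈ α j', s < t) →
          ∃ p : Fin (m.1 + 1) → S,
            (∀ j, (p j : WithOne S) = lProd f (α j)) ∧
            (Finset.image p Finset.univ).card = m.1 + 1 ∧
            c m (Finset.image p Finset.univ) = i m :=
  simultaneous_tree_ramsey_lemma_general e hnp hid k r c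
end
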